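/- Let (x_n)_{n∈I} be a frame with dual frame (z_n), and suppose T = I − Σ_{i=1}^k θ_{z_i, x_i} is invertible, where E = {1,...,k}. Then for all h ∈ H: Th = Σ_{n∈E^c} ⟨h, x_n⟩ z_n, and consequently h = Σ_{n∈E^c} ⟨h, x_n⟩ T⁻¹z_n. -/

import Mathlib

noncomputable section

variable {H : Type*} [NormedAddCommGroup H] [InnerProductSpace ℂ H] [CompleteSpace H]

/-- `(x n)_{n ∈ I}` is a frame for `H` with frame bounds `A`, `B`. -/
def IsFrameOn (x : ℕ → H) (I : Set ℕ) (A B : ℝ) : Prop :=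
  0 < A ∧ 0 < B ∧ ∀ h : H,
    Summable (fun n : I => ‖(inner ℂ (x n) h : ℂ)‖ ^ 2) ∧
    A * ‖h‖ ^ 2 ≤ ∑' n : I, ‖(inner ℂ (x n) h : ℂ)‖ ^ 2 ∧
    ∑' n : I, ‖(inner ℂ (x n) h : ℂ)‖ ^ 2 ≤ B * ‖h‖ ^ 2

/-- `(z n)_{n ∈ I}` is a dual frame of `(x n)_{n ∈ I}`. -/
def IsDualFrameOn (z x : ℕ → H) (I : Set ℕ) : Prop :=
  (∃ A B : ℝ, IsFrameOn z I A B) ∧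
  ∀ h : H, HasSum (fun n : I => (inner ℂ (x n) h : ℂ) • z n) h

/-- The rank-one operator `θ_{y,x} : h ↦ ⟨h, x⟩ y`. -/
def rankOne (y x : H) : H →L[ℂ] H := (innerSL ℂ x).smulRight y

theorem HasSum.subtype_sdiff_finset {α G : Type*} [AddCommGroup G] [TopologicalSpace G]
    [IsTopologicalAddGroup G] {f : α → G} {I : Set α} {s : Finset α} {a : G}
    (hf : HasSum (fun n : I => f n) a) (hs : (s : Set α) ⊆ I) :
    HasSum (fun n : (I \ s : Set α) => f n) (a - ∑ i ∈ s, f i) := by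
  rw [← Function.comp_def, hasSum_subtype_iff_indicator, Set.indicator_sdiff hs]
  exact (hasSum_subtype_iff_indicator.mp hf).sub (hasSum_subtype_iff_indicator.mp (s.hasSum f))

theorem rankOne_apply {E : Type*} [NormedAddCommGroup E] [InnerProductSpace ℂ E] (y x h : E) :
    rankOne y x h = inner ℂ x h • y :=
  rfl

theorem id_sub_sum_rankOne_apply {E ι : Type*} [NormedAddCommGroup E] [InnerProductSpace ℂ E]
    (s : Finset ι) (x z : ι → E) (h : E) :
    (ContinuousLinearMap.id ℂ E - ∑ i ∈ s, rankOne (z i) (x i)) h =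
      h - ∑ i ∈ s, inner ℂ (x i) h • z i := by
  simp only [sub_apply, ContinuousLinearMap.id_apply, sum_apply, rankOne_apply]

theorem stmt17_general (x z : ℕ → H) (I : Set ℕ)
    (hz : IsDualFrameOn z x I) (k : ℕ)
    (hE : ((Finset.Icc 1 k : Finset ℕ) : Set ℕ) ⊂ I)
    (Tinv : H →L[ℂ] H)
    (hT₁ : Tinv.comp (ContinuousLinearMap.id ℂ H - ∑ i ∈ Finset.Icc 1 k, rankOne (z i) (x i)) =
      ContinuousLinearMap.id ℂ H) :
    ∀ h : H,
      HasSum (fun n : (I \ ((Finset.Icc 1 k : Finset ℕ) : Set ℕ) : Set ℕ) =>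
        (inner ℂ (x n) h : ℂ) • z n)
        ((ContinuousLinearMap.id ℂ H - ∑ i ∈ Finset.Icc 1 k, rankOne (z i) (x i)) h) ∧
      HasSum (fun n : (I \ ((Finset.Icc 1 k : Finset ℕ) : Set ℕ) : Set ℕ) =>
        (inner ℂ (x n) h : ℂ) • Tinv (z n)) h := by
  intro h
  have hT := (hz.2 h).subtype_sdiff_finset (f := fun n => inner ℂ (x n) h • z n) hE.subset
  rw [← id_sub_sum_rankOne_apply _ x z] at hT
  refine ⟨hT, ?_⟩
  have hTinv := DFunLike.congr_fun hT₁ h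
  rw [ContinuousLinearMap.comp_apply, ContinuousLinearMap.id_apply] at hTinv
  simpa only [map_smul, hTinv] using hT.mapL Tinv

/-- If `(z n)` is a dual frame of `(x n)_{n ∈ I}` and
`T = I − Σ_{i=1}^k θ_{z i, x i}` is invertible (`E = {1,…,k}`), then
`T h = Σ_{n ∈ I \ E} ⟨h, x n⟩ z n` and `h = Σ_{n ∈ I \ E} ⟨h, x n⟩ T⁻¹ z n`. -/
theorem stmt17 (x z : ℕ → H) (I : Set ℕ) (A B : ℝ) (hx : IsFrameOn x I A B)
    (hz : IsDualFrameOn z x I) (k : ℕ)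
    (hE : ((Finset.Icc 1 k : Finset ℕ) : Set ℕ) ⊂ I)
    (Tinv : H →L[ℂ] H)
    (hT₁ : Tinv.comp (ContinuousLinearMap.id ℂ H - ∑ i ∈ Finset.Icc 1 k, rankOne (z i) (x i)) =
      ContinuousLinearMap.id ℂ H)
    (hT₂ : (ContinuousLinearMap.id ℂ H - ∑ i ∈ Finset.Icc 1 k, rankOne (z i) (x i)).comp Tinv =
      ContinuousLinearMap.id ℂ H) :
    ∀ h : H,
      HasSum (fun n : (I \ ((Finset.Icc 1 k : Finset ℕ) : Set ℕ) : Set ℕ) =>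
        (inner ℂ (x n) h : ℂ) • z n)
        ((ContinuousLinearMap.id ℂ H - ∑ i ∈ Finset.Icc 1 k, rankOne (z i) (x i)) h) ∧
      HasSum (fun n : (I \ ((Finset.Icc 1 k : Finset ℕ) : Set ℕ) : Set ℕ) =>
        (inner ℂ (x n) h : ℂ) • Tinv (z n)) h :=
  stmt17_general x z I hz k hE Tinv hT₁

end
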